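/- arXiv:2506.07343 — 3 statements merged into one kernel-verified Lean document; each statement's English description precedes it below -/
import Mathlib

section
/- With potentials q_j = j/(2(m+1)) for j = 0,…,m, the walk profiles can be exactly recovered by the inverse discrete Fourier transform: Φ(m,k) = (1/(m+1)) Σ_{j=0}^{m} e^{-i4πq_j k} e^{i2πq_j m} A_{q_j}^m for every 0 ≤ k ≤ m. -/
open Matrix Complex Finset

/-- Magnetic matrix `A_q = e^{i2πq} A + e^{-i2πq} Aᵀ` of a real matrix `A`. -/
noncomputable def magn {n : ℕ} (A : Matrix (Fin n) (Fin n) ℝ) (q : ℝ) :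
    Matrix (Fin n) (Fin n) ℂ :=
  Complex.exp ((2 * Real.pi * q : ℝ) * Complex.I) • A.map (Complex.ofReal) +
    Complex.exp ((-(2 * Real.pi * q) : ℝ) * Complex.I) • Aᵀ.map (Complex.ofReal)

/-- Walk profile `Φ(m,k)`. -/
noncomputable def walkProfile {n : ℕ} (A : Matrix (Fin n) (Fin n) ℝ) (m k : ℕ) :
    Matrix (Fin n) (Fin n) ℝ :=
  ∑ b ∈ Finset.univ.filter
      (fun b : Fin m → Bool => (Finset.univ.filter (fun j => b j = true)).card = k),
    (List.ofFn (fun j : Fin m => if b j then A else Aᵀ)).prod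

/-!
Expanding `A_q ^ m` without commuting `A` and `Aᵀ`, and grouping the words by their number `t`
of letters `A`, gives `A_q ^ m = ∑ t, e^{i2πq(2t - m)} Φ(m, t)`: a trigonometric polynomial in `q`
whose coefficients are the walk profiles. At `q_j = j / (2(m + 1))` the weighted phase
`e^{-i4πq_j k} e^{i2πq_j m} e^{i2πq_j(2t - m)}` equals `ζ^{j(t - k)}` for the primitive
`(m + 1)`-th root of unity `ζ = e^{2πi/(m + 1)}`, and summing over `j` kills every `t ≠ k`
because `|t - k| ≤ m`.
-/

section Words

variable {S : Type*} [Semiring S]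

def wordSum (a b : S) (m k : ℕ) : S :=
  ∑ f ∈ univ.filter (fun f : Fin m → Bool => #(univ.filter (fun j => f j = true)) = k),
    (List.ofFn fun j => if f j then a else b).prod

theorem add_pow_eq_sum_words (a b : S) (m : ℕ) :
    (a + b) ^ m = ∑ f : Fin m → Bool, (List.ofFn fun j => if f j then a else b).prod := by
  induction m with
  | zero => simp
  | succ m ih =>
    rw [pow_succ', ih, ← (Fin.consEquiv fun _ => Bool).sum_comp, Fintype.sum_prod_type,
      Fintype.sum_bool]
    simp only [Fin.consEquiv, Equiv.coe_fn_mk, List.ofFn_succ, Fin.cons_zero, Fin.cons_succ,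
      List.prod_cons, if_true, Bool.false_eq_true, if_false, ← mul_sum, add_mul]

theorem add_pow_eq_sum_wordSum (a b : S) (m : ℕ) :
    (a + b) ^ m = ∑ k ∈ range (m + 1), wordSum a b m k := by
  rw [add_pow_eq_sum_words]
  refine (sum_fiberwise_of_maps_to (fun f _ => mem_range.2 ?_) _).symm
  exact Nat.lt_succ_of_le ((card_le_univ _).trans_eq (Fintype.card_fin m))

theorem map_wordSum {T F : Type*} [Semiring T] [FunLike F S T] [RingHomClass F S T] (φ : F)
    (a b : S) (m k : ℕ) : φ (wordSum a b m k) = wordSum (φ a) (φ b) m k := by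
  simp only [wordSum, map_sum, map_list_prod, List.map_ofFn, Function.comp_def, apply_ite]

variable {R : Type*} [CommSemiring R] [Algebra R S]

theorem List.prod_ofFn_smul {m : ℕ} (c : Fin m → R) (x : Fin m → S) :
    (List.ofFn fun j => c j • x j).prod = (∏ j, c j) • (List.ofFn x).prod := by
  induction m with
  | zero => simp
  | succ m ih =>
    simp only [List.ofFn_succ, List.prod_cons, ih, Fin.prod_univ_succ, smul_mul_smul_comm]

theorem wordSum_smul_smul (c d : R) (a b : S) (m k : ℕ) :
    wordSum (c • a) (d • b) m k = (c ^ k * d ^ (m - k)) • wordSum a b m k := by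
  rw [wordSum, wordSum, smul_sum]
  refine sum_congr rfl fun f hf => ?_
  have hcard : #(univ.filter fun j => f j = true) = k := (mem_filter.1 hf).2
  have hcompl : #(univ.filter fun j => ¬f j = true) = m - k := by
    have := card_filter_add_card_filter_not (s := (univ : Finset (Fin m))) (f · = true)
    rw [card_univ, Fintype.card_fin] at this
    omega
  calc (List.ofFn fun j => if f j then c • a else d • b).prod
      = (List.ofFn fun j => (if f j then c else d) • if f j then a else b).prod := by
        congr 2 with j; split_ifs <;> rfl
    _ = _ := by rw [List.prod_ofFn_smul, prod_ite, prod_const, prod_const, hcard, hcompl]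

theorem smul_add_smul_pow (c d : R) (a b : S) (m : ℕ) :
    (c • a + d • b) ^ m = ∑ k ∈ range (m + 1), (c ^ k * d ^ (m - k)) • wordSum a b m k := by
  simp only [add_pow_eq_sum_wordSum, wordSum_smul_smul]

end Words

theorem IsPrimitiveRoot.sum_zpow_pow {K : Type*} [Field K] {ζ : K} {N : ℕ}
    (hζ : IsPrimitiveRoot ζ N) (d : ℤ) :
    ∑ j ∈ range N, (ζ ^ d) ^ j = if (N : ℤ) ∣ d then (N : K) else 0 := by
  split_ifs with hd
  · simp [(hζ.zpow_eq_one_iff_dvd d).2 hd]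
  · have hN : (ζ ^ d) ^ N = 1 := by
      rw [← zpow_natCast, ← _root_.zpow_mul, mul_comm, _root_.zpow_mul, zpow_natCast,
        hζ.pow_eq_one, _root_.one_zpow]
    rw [geom_sum_eq (mt (hζ.zpow_eq_one_iff_dvd d).1 hd), hN, sub_self, zero_div]

theorem dft_coeff_eq_rootOfUnity_pow (m k t j : ℕ) (ht : t ≤ m) :
    exp ((-(4 * Real.pi * ((j : ℝ) / (2 * (m + 1))) * k) : ℝ) * I) *
        exp ((2 * Real.pi * ((j : ℝ) / (2 * (m + 1))) * m : ℝ) * I) *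
        (exp ((2 * Real.pi * ((j : ℝ) / (2 * (m + 1))) : ℝ) * I) ^ t *
          exp ((-(2 * Real.pi * ((j : ℝ) / (2 * (m + 1)))) : ℝ) * I) ^ (m - t)) =
      (exp (2 * Real.pi * I / (m + 1 : ℕ)) ^ ((t : ℤ) - k)) ^ j := by
  rw [← exp_int_mul, ← exp_nat_mul, ← exp_nat_mul, ← exp_nat_mul, ← exp_add, ← exp_add,
    ← exp_add]
  congr 1
  push_cast [Nat.cast_sub ht]
  field_simp
  ring

theorem sum_dft_coeff_eq_ite (m k t : ℕ) (hk : k ≤ m) (ht : t ≤ m) :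
    ∑ j ∈ range (m + 1),
      exp ((-(4 * Real.pi * ((j : ℝ) / (2 * (m + 1))) * k) : ℝ) * I) *
        exp ((2 * Real.pi * ((j : ℝ) / (2 * (m + 1))) * m : ℝ) * I) *
        (exp ((2 * Real.pi * ((j : ℝ) / (2 * (m + 1))) : ℝ) * I) ^ t *
          exp ((-(2 * Real.pi * ((j : ℝ) / (2 * (m + 1)))) : ℝ) * I) ^ (m - t)) =
      if t = k then (m + 1 : ℂ) else 0 := by
  have hdvd : (m + 1 : ℤ) ∣ (t : ℤ) - k ↔ t = k := by
    refine ⟨fun h => ?_, fun h => by simp [h]⟩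
    have := Int.eq_zero_of_abs_lt_dvd h (abs_sub_lt_iff.2 ⟨by omega, by omega⟩)
    omega
  rw [sum_congr rfl fun j _ => dft_coeff_eq_rootOfUnity_pow m k t j ht,
    (isPrimitiveRoot_exp (m + 1) m.succ_ne_zero).sum_zpow_pow]
  simp only [Nat.cast_succ, hdvd]

theorem walkProfile_eq_wordSum {n : ℕ} (A : Matrix (Fin n) (Fin n) ℝ) (m k : ℕ) :
    walkProfile A m k = wordSum A Aᵀ m k := rfl

theorem walkProfile_inverse_dft {n : ℕ} (A : Matrix (Fin n) (Fin n) ℝ) (m k : ℕ)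
    (hk : k ≤ m) :
    (walkProfile A m k).map (Complex.ofReal) =
      ((m + 1 : ℂ))⁻¹ •
        ∑ j ∈ Finset.range (m + 1),
          (Complex.exp ((-(4 * Real.pi * ((j : ℝ) / (2 * (m + 1))) * k) : ℝ) * Complex.I) *
            Complex.exp ((2 * Real.pi * ((j : ℝ) / (2 * (m + 1))) * m : ℝ) * Complex.I)) •
            (magn A ((j : ℝ) / (2 * (m + 1)))) ^ m := by
  have hΦ : (walkProfile A m k).map ofReal = wordSum (A.map ofReal) (Aᵀ.map ofReal) m k := by
    rw [walkProfile_eq_wordSum]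
    exact map_wordSum ofRealHom.mapMatrix A Aᵀ m k
  have hdft : ∑ j ∈ range (m + 1),
      (exp ((-(4 * Real.pi * ((j : ℝ) / (2 * (m + 1))) * k) : ℝ) * I) *
        exp ((2 * Real.pi * ((j : ℝ) / (2 * (m + 1))) * m : ℝ) * I)) •
        (magn A ((j : ℝ) / (2 * (m + 1)))) ^ m =
      (m + 1 : ℂ) • wordSum (A.map ofReal) (Aᵀ.map ofReal) m k := by
    simp_rw [magn, smul_add_smul_pow, smul_sum, smul_smul]
    rw [sum_comm]
    simp_rw [← sum_smul]
    rw [sum_congr rfl fun t ht => by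
      rw [sum_dft_coeff_eq_ite m k t hk (Nat.lt_succ_iff.1 (mem_range.1 ht))]]
    simp_rw [ite_smul, zero_smul, sum_ite_eq', mem_range, if_pos (Nat.lt_succ_of_le hk)]
  rw [hΦ, hdft, smul_smul, inv_mul_cancel₀ (Nat.cast_add_one_ne_zero m), one_smul]
end

section
/- The number of distinct walk profile matrices at a fixed step m is m+1, and since each magnetic matrix power A_q^m is a linear combination of Φ(m,0),…,Φ(m,m) with coefficients e^{i2πq(2k−m)}, the family {A_q^m : q ∈ ℝ} spans a complex vector space of dimension at most m+1 in the space of n×n complex matrices. -/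
open Matrix Complex Finset

lemma expand_pow {n : ℕ} (M N : Matrix (Fin n) (Fin n) ℂ) (x y : ℂ) (m : ℕ) :
    (x • M + y • N) ^ m =
      ∑ b : Fin m → Bool,
        (∏ j, if b j then x else y) • (List.ofFn (fun j : Fin m => if b j then M else N)).prod := by
  induction m with
  | zero => simp
  | succ m ih =>
    rw [pow_succ', ih, Finset.mul_sum]
    rw [← ((Fin.consEquiv (fun _ : Fin (m+1) => Bool))).sum_comp]
    rw [Fintype.sum_prod_type]
    simp only [Fin.consEquiv_apply, Fin.prod_univ_succ, Fin.cons_zero, Fin.cons_succ,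
      List.ofFn_succ, List.prod_cons]
    rw [Fintype.sum_bool]
    rw [← Finset.sum_add_distrib]
    refine Finset.sum_congr rfl fun b _ => ?_
    simp only [Bool.false_eq_true, eq_self_iff_true, if_true, if_false, add_mul, smul_add,
      smul_mul_assoc, mul_smul_comm, smul_smul]
    module

lemma walkProfile_map {n : ℕ} (A : Matrix (Fin n) (Fin n) ℝ) (m k : ℕ) :
    (walkProfile A m k).map (Complex.ofReal) =
      ∑ b ∈ Finset.univ.filter
          (fun b : Fin m → Bool => (Finset.univ.filter (fun j => b j = true)).card = k),
        (List.ofFn (fun j : Fin m =>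
          if b j then A.map Complex.ofReal else (A.map Complex.ofReal)ᵀ)).prod := by
  have h : ∀ (B : Matrix (Fin n) (Fin n) ℝ), B.map Complex.ofReal =
      Complex.ofRealHom.mapMatrix B := fun B => rfl
  rw [walkProfile, h, map_sum]
  refine Finset.sum_congr rfl fun b _ => ?_
  rw [map_list_prod Complex.ofRealHom.mapMatrix]
  congr 1
  rw [List.map_ofFn]
  congr 1
  funext j
  simp only [Function.comp_apply]
  split <;> simp [← h, Matrix.transpose_map]

lemma magn_pow_eq {n : ℕ} (A : Matrix (Fin n) (Fin n) ℝ) (m : ℕ) (q : ℝ) :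
    (magn A q) ^ m =
        ∑ k ∈ Finset.range (m + 1),
          Complex.exp ((2 * Real.pi * q * (2 * (k : ℝ) - m) : ℝ) * Complex.I) •
            (walkProfile A m k).map (Complex.ofReal) := by
  set c : ℂ := ((2 * Real.pi * q : ℝ) : ℂ) * Complex.I with hc
  have hmagn : magn A q = Complex.exp c • (A.map Complex.ofReal) +
      Complex.exp (-c) • (A.map Complex.ofReal)ᵀ := by
    have h1 : ((-(2 * Real.pi * q) : ℝ) : ℂ) * Complex.I = -c := by
      rw [hc]; push_cast; ring
    have h2 : ((2 * Real.pi * q : ℝ) : ℂ) * Complex.I = c := rfl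
    rw [magn, Matrix.transpose_map, h1, h2]
  rw [hmagn, expand_pow]
  rw [← Finset.sum_fiberwise_of_maps_to (g := fun b : Fin m → Bool =>
      (Finset.univ.filter (fun j => b j = true)).card)
      (t := Finset.range (m + 1))
      (fun b _ => Finset.mem_range_succ_iff.mpr (by
        exact (Finset.card_filter_le _ _).trans (by simp)))]
  refine Finset.sum_congr rfl fun k hk => ?_
  rw [walkProfile_map, Finset.smul_sum]
  refine Finset.sum_congr rfl fun b hb => ?_
  simp only [Finset.mem_filter, Finset.mem_univ, true_and] at hb
  congr 1
  rw [Finset.prod_ite (f := fun _ => Complex.exp c) (g := fun _ => Complex.exp (-c)),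
    Finset.prod_const, Finset.prod_const, hb]
  have hcard : (Finset.univ.filter (fun j => ¬ b j = true)).card = m - k := by
    have := Finset.card_filter_add_card_filter_not (s := (Finset.univ : Finset (Fin m)))
      (p := fun j => b j = true)
    simp only [Finset.card_univ, Fintype.card_fin, hb] at this
    omega
  rw [hcard, ← Complex.exp_nat_mul, ← Complex.exp_nat_mul, ← Complex.exp_add]
  congr 1
  have : ((m - k : ℕ) : ℂ) = (m : ℂ) - k := by
    have := Finset.mem_range_succ_iff.mp hk
    push_cast [Nat.cast_sub this]
    ring
  rw [this, hc]
  push_cast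
  ring

/-- There are `m+1` walk-profile matrices `Φ(m,0), …, Φ(m,m)` at step `m`; each magnetic
matrix power `A_q^m` is the linear combination `∑_k e^{i2πq(2k-m)} Φ(m,k)`, hence the family
`{A_q^m : q ∈ ℝ}` spans a subspace of dimension at most `m+1`. -/
theorem magn_pow_span_rank_le {n : ℕ} (A : Matrix (Fin n) (Fin n) ℝ) (m : ℕ) :
    (∀ q : ℝ, (magn A q) ^ m =
        ∑ k ∈ Finset.range (m + 1),
          Complex.exp ((2 * Real.pi * q * (2 * (k : ℝ) - m) : ℝ) * Complex.I) •
            (walkProfile A m k).map (Complex.ofReal)) ∧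
    Module.rank ℂ (Submodule.span ℂ (Set.range fun q : ℝ => (magn A q) ^ m)) ≤ m + 1 := by
  refine ⟨magn_pow_eq A m, ?_⟩
  set S : Set (Matrix (Fin n) (Fin n) ℂ) :=
    Set.range (fun k : Fin (m + 1) => (walkProfile A m (k : ℕ)).map Complex.ofReal) with hS
  have hsub : Submodule.span ℂ (Set.range fun q : ℝ => (magn A q) ^ m) ≤ Submodule.span ℂ S := by
    rw [Submodule.span_le]
    rintro _ ⟨q, rfl⟩
    simp only
    rw [magn_pow_eq A m q]
    apply Submodule.sum_mem
    intro k hk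
    apply Submodule.smul_mem
    apply Submodule.subset_span
    exact ⟨⟨k, Finset.mem_range.mp hk⟩, rfl⟩
  calc Module.rank ℂ (Submodule.span ℂ (Set.range fun q : ℝ => (magn A q) ^ m))
      ≤ Module.rank ℂ (Submodule.span ℂ S) := Submodule.rank_mono hsub
    _ ≤ Cardinal.mk S := rank_span_le S
    _ ≤ Cardinal.mk (Fin (m + 1)) := Cardinal.mk_range_le
    _ = m + 1 := by simp
end

section
/- Let C be a directed cycle on m ≥ 3 distinct nodes u_1,…,u_m with edge orientations given by a binary string b_1⋯b_m (b_j = 1 means u_j → u_{j+1}, b_j = 0 means u_{j+1} → u_j, indices mod m). If the string b has at least two zeros and at least two ones, then there exist two orientation strings b and b' with the same number of ones that are not cyclic rotations of each other; consequently the cycle graphs C_b and C_{b'} are non-isomorphic as directed graphs but have identical self-returning walk profiles Φ_{u,u}(m,k) (restricted to walks with no repeated nodes) for every node u and every k. -/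
open Finset

/-- Edge relation of the cycle graph `C_b` on vertices `ZMod m`: the edge between `x` and
`x+1` is oriented `x → x+1` if `b x = true` and `x+1 → x` if `b x = false`. -/
def cycEdge (m : ℕ) (b : ZMod m → Bool) (x y : ZMod m) : Prop :=
  (y = x + 1 ∧ b x = true) ∨ (x = y + 1 ∧ b y = false)

/-- Number of `m`-step closed bidirectional walks from `u` to `u` in the digraph with edge
relation `E`, using exactly `k` forward edges, with no repeated nodes among the first `m`
visited nodes. A walk is a node sequence `p.1` together with direction choices `p.2`
(`true` = forward step along an edge, `false` = backward step). -/
noncomputable def repFreeClosedWalkCount {V : Type*} [Fintype V] (E : V → V → Prop)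
    (m : ℕ) (u : V) (k : ℕ) : ℕ :=
  Nat.card {p : (Fin (m + 1) → V) × (Fin m → Bool) //
    p.1 0 = u ∧ p.1 (Fin.last m) = u ∧
    Function.Injective (fun j : Fin m => p.1 j.castSucc) ∧
    (∀ j : Fin m,
      if p.2 j then E (p.1 j.castSucc) (p.1 j.succ) else E (p.1 j.succ) (p.1 j.castSucc)) ∧
    (Finset.univ.filter fun j => p.2 j = true).card = k}

section basics
set_option linter.unusedSectionVars false
variable {m : ℕ} [NeZero m]

lemma zmod_two_ne_zero (hm : 3 ≤ m) : (2 : ZMod m) ≠ 0 := by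
  have h2 : ((2:ℕ) : ZMod m) ≠ 0 := by
    rw [Ne, ZMod.natCast_eq_zero_iff]
    intro h; have := Nat.le_of_dvd (by norm_num) h; omega
  simpa using h2

lemma zmod_self_ne_add_two (hm : 3 ≤ m) (x : ZMod m) : x ≠ x + 2 := by
  intro h
  apply zmod_two_ne_zero hm
  have h2 : x + 0 = x + 2 := by rw [add_zero]; exact h
  exact (add_left_cancel h2).symm

lemma edge_fwd (hm : 3 ≤ m) (b : ZMod m → Bool) (x : ZMod m) :
    cycEdge m b x (x + 1) ↔ b x = true := by
  unfold cycEdge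
  constructor
  · rintro (⟨-, h⟩ | ⟨h, -⟩)
    · exact h
    · exact absurd (by rwa [add_assoc, one_add_one_eq_two] at h) (zmod_self_ne_add_two hm x)
  · exact fun h => Or.inl ⟨rfl, h⟩

lemma edge_bwd (hm : 3 ≤ m) (b : ZMod m → Bool) (x : ZMod m) :
    cycEdge m b (x + 1) x ↔ b x = false := by
  unfold cycEdge
  constructor
  · rintro (⟨h, -⟩ | ⟨-, h⟩)
    · exact absurd (by rwa [add_assoc, one_add_one_eq_two] at h) (zmod_self_ne_add_two hm x)
    · exact h
  · exact fun h => Or.inr ⟨rfl, h⟩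

lemma edge_adj {b : ZMod m → Bool} {x y : ZMod m} (h : cycEdge m b x y) :
    y = x + 1 ∨ x = y + 1 := by
  rcases h with ⟨h, -⟩ | ⟨h, -⟩
  · exact Or.inl h
  · exact Or.inr h

lemma classify (hm : 3 ≤ m) (u : ZMod m) (p : Fin (m+1) → ZMod m)
    (h0 : p 0 = u) (hl : p (Fin.last m) = u)
    (hinj : Function.Injective fun j : Fin m => p j.castSucc)
    (hstep : ∀ j : Fin m, p j.succ = p j.castSucc + 1 ∨ p j.succ = p j.castSucc - 1) :
    (∀ j : Fin (m+1), p j = u + (j.val : ZMod m)) ∨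
      (∀ j : Fin (m+1), p j = u - (j.val : ZMod m)) := by
  have key : ∀ ε : ZMod m, (ε = 1 ∨ ε = -1) →
      p ⟨1, by omega⟩ = p ⟨0, by omega⟩ + ε →
      ∀ i (hi : i ≤ m), p ⟨i, by omega⟩ = u + ε * i := by
    intro ε hε h1
    have step : ∀ i, (hi : i + 1 ≤ m) → p ⟨i+1, by omega⟩ = p ⟨i, by omega⟩ + ε := by
      intro i
      induction i with
      | zero => intro _; exact h1
      | succ n ih =>
        intro hn
        have ihn := ih (by omega)
        have hs := hstep ⟨n+1, by omega⟩
        simp only [Fin.castSucc_mk, Fin.succ_mk] at hs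
        have bad : p ⟨n+2, by omega⟩ = p ⟨n, by omega⟩ → False := by
          intro hb
          rcases Nat.lt_or_ge (n+2) m with hlt | hge
          · have := hinj (a₁ := ⟨n+2, hlt⟩) (a₂ := ⟨n, by omega⟩)
              (by simpa only [Fin.castSucc_mk] using hb)
            simp [Fin.ext_iff] at this
          · have hm2 : n + 2 = m := by omega
            have hlast : (⟨n+2, by omega⟩ : Fin (m+1)) = Fin.last m := by
              simp [Fin.ext_iff, hm2]
            rw [hlast, hl, ← h0] at hb
            have h00 : p 0 = p ⟨0, by omega⟩ := rfl
            rw [h00] at hb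
            have := hinj (a₁ := ⟨n, by omega⟩) (a₂ := ⟨0, by omega⟩)
              (by simpa only [Fin.castSucc_mk] using hb.symm)
            simp [Fin.ext_iff] at this
            omega
        rcases hε with rfl | rfl
        · rcases hs with h | h
          · exact h
          · exact absurd (by rw [h, ihn]; ring) bad
        · rcases hs with h | h
          · exact absurd (by rw [h, ihn]; ring) bad
          · rw [h, ihn]; ring
    intro i
    induction i with
    | zero =>
      intro _
      have h00 : p ⟨0, by omega⟩ = p 0 := rfl
      rw [h00, h0]; push_cast; ring
    | succ n ih =>
      intro hn
      rw [step n (by omega), ih (by omega)]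
      push_cast; ring
  have hs0 := hstep ⟨0, by omega⟩
  simp only [Fin.castSucc_mk, Fin.succ_mk] at hs0
  rcases hs0 with h | h
  · left
    intro j
    have hk := key 1 (Or.inl rfl) h j.val (by omega)
    rw [one_mul] at hk
    simpa using hk
  · right
    intro j
    have hk := key (-1) (Or.inr rfl) (by rw [h]; ring) j.val (by omega)
    rw [neg_one_mul, ← sub_eq_add_neg] at hk
    simpa using hk

/-- The equivalence between `Fin m` and `ZMod m` by `natCast`. -/
def zmodEquiv (m : ℕ) [NeZero m] : Fin m ≃ ZMod m where
  toFun j := (j.val : ZMod m)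
  invFun x := ⟨x.val, ZMod.val_lt x⟩
  left_inv j := by ext; simp [ZMod.val_cast_of_lt j.isLt]
  right_inv x := ZMod.natCast_rightInverse x

lemma card_filter_zmod (P : ZMod m → Prop) [DecidablePred P] :
    (univ.filter fun x : ZMod m => P x).card
      = (univ.filter fun j : Fin m => P (j.val : ZMod m)).card := by
  refine Finset.card_equiv (zmodEquiv m).symm fun x => ?_
  simp only [mem_filter, mem_univ, true_and]
  rw [show ((((zmodEquiv m).symm x : Fin m) : ℕ) : ZMod m) = x from (zmodEquiv m).right_inv x]

lemma card_filter_fin_comp (g : ZMod m ≃ ZMod m) (Q : ZMod m → Prop) [DecidablePred Q] :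
    (univ.filter fun j : Fin m => Q (g (j.val : ZMod m))).card
      = (univ.filter fun x : ZMod m => Q x).card := by
  rw [← card_filter_zmod (fun x => Q (g x))]
  exact Finset.card_equiv g (fun x => by simp)

lemma card_filter_val_lt (k : ℕ) (hk : k ≤ m) :
    (univ.filter fun x : ZMod m => x.val < k).card = k := by
  rw [← Finset.card_range k]
  apply Finset.card_bij' (fun x _ => x.val) (fun a _ => ((a : ℕ) : ZMod m))
  · intro x hx; simp only [mem_filter] at hx; simpa using hx.2
  · intro a ha
    simp only [mem_range] at ha
    simp [ZMod.val_cast_of_lt (lt_of_lt_of_le ha hk), ha]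
  · intro x hx; exact ZMod.natCast_rightInverse x
  · intro a ha
    simp only [mem_range] at ha
    exact ZMod.val_cast_of_lt (lt_of_lt_of_le ha hk)

lemma walkCount (hm : 3 ≤ m) (b : ZMod m → Bool) (u : ZMod m) (k : ℕ) :
    repFreeClosedWalkCount (cycEdge m b) m u k =
      (if k = (univ.filter fun x => b x = true).card then 1 else 0) +
      (if k = (univ.filter fun x => b x = false).card then 1 else 0) := by
  classical
  set cT := (univ.filter fun x => b x = true).card with hcT
  set cF := (univ.filter fun x => b x = false).card with hcF
  set F : (Fin (m+1) → ZMod m) × (Fin m → Bool) :=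
    (fun j => u + (j.val : ZMod m), fun j => b (u + (j.val : ZMod m))) with hF
  set B : (Fin (m+1) → ZMod m) × (Fin m → Bool) :=
    (fun j => u - (j.val : ZMod m), fun j => !b (u - (j.val : ZMod m) - 1)) with hB
  have hcastsucc : ∀ j : Fin m, ((j.castSucc : Fin (m+1)).val : ZMod m) = (j.val : ZMod m) := by
    intro j; rw [Fin.coe_castSucc]
  have hsuccval : ∀ j : Fin m, ((j.succ : Fin (m+1)).val : ZMod m) = (j.val : ZMod m) + 1 := by
    intro j; rw [Fin.val_succ]; push_cast; ring
  -- count of true flags in F and B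
  have hFcount : (univ.filter fun j : Fin m => F.2 j = true).card = cT := by
    rw [hcT]
    exact card_filter_fin_comp (Equiv.addLeft u) (fun x => b x = true)
  have hBcount : (univ.filter fun j : Fin m => B.2 j = true).card = cF := by
    rw [hcF]
    have : ∀ j : Fin m, (B.2 j = true) = (b ((u - 1) - (j.val : ZMod m)) = false) := by
      intro j
      simp only [hB, Bool.not_eq_true']
      congr 2
      ring
    simp only [this]
    exact card_filter_fin_comp (Equiv.subLeft (u - 1)) (fun x => b x = false)
  have hFB : F ≠ B := by
    intro h
    have h1 := congrFun (congrArg Prod.fst h) ⟨1, by omega⟩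
    simp only [hF, hB] at h1
    have hv : ((⟨1, by omega⟩ : Fin (m+1)).val : ZMod m) = 1 := by norm_num
    rw [hv] at h1
    exact zmod_two_ne_zero hm
      (by rw [show (2:ZMod m) = u + 1 - (u - 1) by ring, h1]; ring)
  have hiff : ∀ p : (Fin (m+1) → ZMod m) × (Fin m → Bool),
      (p.1 0 = u ∧ p.1 (Fin.last m) = u ∧
        Function.Injective (fun j : Fin m => p.1 j.castSucc) ∧
        (∀ j : Fin m, if p.2 j then cycEdge m b (p.1 j.castSucc) (p.1 j.succ)
          else cycEdge m b (p.1 j.succ) (p.1 j.castSucc)) ∧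
        (univ.filter fun j => p.2 j = true).card = k)
      ↔ ((p = F ∧ k = cT) ∨ (p = B ∧ k = cF)) := by
    intro p
    constructor
    · rintro ⟨h0, hl, hinj, hdir, hcnt⟩
      have hstep : ∀ j : Fin m, p.1 j.succ = p.1 j.castSucc + 1 ∨
          p.1 j.succ = p.1 j.castSucc - 1 := by
        intro j
        have hd := hdir j
        by_cases hj : p.2 j
        · rw [if_pos hj] at hd
          rcases edge_adj hd with h | h
          · exact Or.inl h
          · exact Or.inr (by rw [h]; ring)
        · rw [if_neg hj] at hd
          rcases edge_adj hd with h | h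
          · exact Or.inr (by rw [h]; ring)
          · exact Or.inl h
      rcases classify hm u p.1 h0 hl hinj hstep with hw | hw
      · -- forward walk
        have h2 : p.2 = F.2 := by
          funext j
          have hc : p.1 j.castSucc = u + (j.val : ZMod m) := by
            rw [hw j.castSucc, hcastsucc]
          have hs : p.1 j.succ = (u + (j.val : ZMod m)) + 1 := by
            rw [hw j.succ, hsuccval]; ring
          have hd := hdir j
          by_cases hj : p.2 j
          · rw [if_pos hj, hc, hs] at hd
            have hbx := (edge_fwd hm b _).mp hd
            simp only [hF, hj, hbx]
          · rw [if_neg hj, hc, hs] at hd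
            have hbx := (edge_bwd hm b _).mp hd
            simp only [hF, hbx]
            simpa using hj
        have h1 : p.1 = F.1 := funext fun j => hw j
        left
        refine ⟨Prod.ext h1 h2, ?_⟩
        rw [← hcnt, h2, hFcount]
      · -- backward walk
        have h2 : p.2 = B.2 := by
          funext j
          have hc : p.1 j.castSucc = (u - (j.val : ZMod m) - 1) + 1 := by
            rw [hw j.castSucc, hcastsucc]; ring
          have hs : p.1 j.succ = u - (j.val : ZMod m) - 1 := by
            rw [hw j.succ, hsuccval]; ring
          have hd := hdir j
          by_cases hj : p.2 j
          · rw [if_pos hj, hc, hs] at hd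
            have hbx := (edge_bwd hm b _).mp hd
            simp only [hB, hj, hbx]
            rfl
          · rw [if_neg hj, hc, hs] at hd
            have hbx := (edge_fwd hm b _).mp hd
            simp only [hB, hbx]
            simpa using hj
        have h1 : p.1 = B.1 := funext fun j => hw j
        right
        refine ⟨Prod.ext h1 h2, ?_⟩
        rw [← hcnt, h2, hBcount]
    · rintro (⟨rfl, rfl⟩ | ⟨rfl, rfl⟩)
      · refine ⟨by simp [hF], by simp [hF, Fin.val_last], ?_, ?_, hFcount⟩
        · intro j j' hjj
          simp only [hF, hcastsucc] at hjj
          have := add_left_cancel hjj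
          have hval : j.val = j'.val := by
            have := congrArg ZMod.val this
            rwa [ZMod.val_cast_of_lt j.isLt, ZMod.val_cast_of_lt j'.isLt] at this
          exact Fin.ext hval
        · intro j
          by_cases hb : b (u + (j.val : ZMod m)) = true
          · have : F.2 j = true := by simp only [hF]; exact hb
            rw [if_pos this]
            have e1 : F.1 j.castSucc = u + (j.val : ZMod m) := by
              simp only [hF]; rw [hcastsucc]
            have e2 : F.1 j.succ = (u + (j.val : ZMod m)) + 1 := by
              simp only [hF]; rw [hsuccval]; ring
            rw [e1, e2]
            exact (edge_fwd hm b _).mpr hb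
          · have hbf : b (u + (j.val : ZMod m)) = false := by
              simpa using hb
            have : ¬ (F.2 j = true) := by simp only [hF]; simp [hbf]
            rw [if_neg this]
            have e1 : F.1 j.castSucc = u + (j.val : ZMod m) := by
              simp only [hF]; rw [hcastsucc]
            have e2 : F.1 j.succ = (u + (j.val : ZMod m)) + 1 := by
              simp only [hF]; rw [hsuccval]; ring
            rw [e1, e2]
            exact (edge_bwd hm b _).mpr hbf
      · refine ⟨by simp [hB], by simp [hB, Fin.val_last], ?_, ?_, hBcount⟩
        · intro j j' hjj
          simp only [hB, hcastsucc] at hjj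
          have h' : (j.val : ZMod m) = (j'.val : ZMod m) := sub_right_injective hjj
          have hval : j.val = j'.val := by
            have := congrArg ZMod.val h'
            rwa [ZMod.val_cast_of_lt j.isLt, ZMod.val_cast_of_lt j'.isLt] at this
          exact Fin.ext hval
        · intro j
          have e1 : B.1 j.castSucc = (u - (j.val : ZMod m) - 1) + 1 := by
            simp only [hB]; rw [hcastsucc]; ring
          have e2 : B.1 j.succ = u - (j.val : ZMod m) - 1 := by
            simp only [hB]; rw [hsuccval]; ring
          by_cases hb : b (u - (j.val : ZMod m) - 1) = false
          · have : B.2 j = true := by simp only [hB]; simp [hb]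
            rw [if_pos this, e1, e2]
            exact (edge_bwd hm b _).mpr hb
          · have hbt : b (u - (j.val : ZMod m) - 1) = true := by simpa using hb
            have : ¬ (B.2 j = true) := by simp only [hB]; simp [hbt]
            rw [if_neg this, e1, e2]
            exact (edge_fwd hm b _).mpr hbt
  rw [repFreeClosedWalkCount]
  rw [Nat.card_congr (Equiv.subtypeEquivRight hiff)]
  by_cases h1 : k = cT <;> by_cases h2 : k = cF
  · rw [if_pos h1, if_pos h2]
    have : ∀ p, ((p = F ∧ k = cT) ∨ (p = B ∧ k = cF)) ↔ p ∈ ({F, B} : Set _) := by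
      intro p; simp [h1.symm, h2.symm, Set.mem_insert_iff]
    rw [Nat.card_congr (Equiv.subtypeEquivRight this), Nat.card_coe_set_eq,
      Set.ncard_pair hFB]
  · rw [if_pos h1, if_neg h2]
    have : ∀ p, ((p = F ∧ k = cT) ∨ (p = B ∧ k = cF)) ↔ p ∈ ({F} : Set _) := by
      intro p; simp [h1.symm, h2, Set.mem_singleton_iff]
    rw [Nat.card_congr (Equiv.subtypeEquivRight this), Nat.card_coe_set_eq,
      Set.ncard_singleton]
  · rw [if_neg h1, if_pos h2]
    have : ∀ p, ((p = F ∧ k = cT) ∨ (p = B ∧ k = cF)) ↔ p ∈ ({B} : Set _) := by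
      intro p; simp [h1, h2.symm, Set.mem_singleton_iff]
    rw [Nat.card_congr (Equiv.subtypeEquivRight this), Nat.card_coe_set_eq,
      Set.ncard_singleton]
  · rw [if_neg h1, if_neg h2]
    have : ∀ p : (Fin (m+1) → ZMod m) × (Fin m → Bool),
        ((p = F ∧ k = cT) ∨ (p = B ∧ k = cF)) ↔ p ∈ (∅ : Set _) := by
      intro p; simp [h1, h2]
    rw [Nat.card_congr (Equiv.subtypeEquivRight this), Nat.card_coe_set_eq,
      Set.ncard_empty]


lemma bool_aux {a c : Bool} (h : (a = true) ↔ (c = false)) : c = !a := by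
  cases a <;> cases c <;> simp_all

lemma bool_aux2 {a c : Bool} (h : (a = true) ↔ (c = true)) : c = a := by
  cases a <;> cases c <;> simp_all

/-- Number of descents (true followed by false). -/
def desc (m : ℕ) [NeZero m] (b : ZMod m → Bool) : ℕ :=
  (univ.filter fun x : ZMod m => b x = true ∧ b (x+1) = false).card

lemma desc_rot {b b' : ZMod m → Bool} {r : ZMod m} (h : ∀ x, b' x = b (x + r)) :
    desc m b' = desc m b := by
  unfold desc
  refine Finset.card_equiv (Equiv.addRight r) fun x => ?_
  simp only [mem_filter, mem_univ, true_and, Equiv.coe_addRight]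
  rw [h x, h (x+1), show x + 1 + r = (x + r) + 1 by ring]

lemma desc_refl {b b' : ZMod m → Bool} {s : ZMod m} (h : ∀ x, b' x = !b (s - x)) :
    desc m b' = desc m b := by
  unfold desc
  refine Finset.card_equiv (Equiv.subLeft (s - 1)) fun x => ?_
  simp only [mem_filter, mem_univ, true_and, Equiv.subLeft_apply]
  rw [h x, h (x+1), show s - (x+1) = s - 1 - x by ring]
  constructor
  · rintro ⟨h1, h2⟩
    refine ⟨by simpa using h2, ?_⟩
    rw [show s - 1 - x + 1 = s - x by ring]
    simpa using h1
  · rintro ⟨h1, h2⟩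
    rw [show s - 1 - x + 1 = s - x by ring] at h2
    exact ⟨by simpa using h2, by simpa using h1⟩

lemma iso_rot_or_refl (hm : 3 ≤ m) {b b' : ZMod m → Bool} (e : ZMod m ≃ ZMod m)
    (hiso : ∀ x y, cycEdge m b x y ↔ cycEdge m b' (e x) (e y)) :
    (∃ r : ZMod m, ∀ x, b' x = b (x + r)) ∨ (∃ s : ZMod m, ∀ x, b' x = !b (s - x)) := by
  have hadj : ∀ x : ZMod m, e (x+1) = e x + 1 ∨ e (x+1) = e x - 1 := by
    intro x
    by_cases hb : b x = true
    · have hE := (hiso x (x+1)).mp ((edge_fwd hm b x).mpr hb)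
      rcases edge_adj hE with h | h
      · exact Or.inl h
      · exact Or.inr (by rw [h]; ring)
    · have hb' : b x = false := by simpa using hb
      have hE := (hiso (x+1) x).mp ((edge_bwd hm b x).mpr hb')
      rcases edge_adj hE with h | h
      · exact Or.inr (by rw [h]; ring)
      · exact Or.inl h
  have same : ∀ x : ZMod m, e (x+1+1) - e (x+1) = e (x+1) - e x := by
    intro x
    have h22 : x + 1 + 1 = x + 2 := by ring
    rcases hadj (x+1) with h2 | h2 <;> rcases hadj x with h1 | h1
    · rw [h2, h1]; ring
    · exfalso
      have : e (x+1+1) = e x := by rw [h2, h1]; ring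
      have := e.injective this
      rw [h22] at this
      exact zmod_self_ne_add_two hm x this.symm
    · exfalso
      have : e (x+1+1) = e x := by rw [h2, h1]; ring
      have := e.injective this
      rw [h22] at this
      exact zmod_self_ne_add_two hm x this.symm
    · rw [h2, h1]; ring
  set ε := e 1 - e 0 with hεdef
  have hkey : ∀ x : ZMod m, e (x + 1) - e x = ε := by
    have hnat : ∀ n : ℕ, e ((n : ZMod m) + 1) - e (n : ZMod m) = ε := by
      intro n
      induction n with
      | zero => simp [hεdef]
      | succ n ih =>
        push_cast
        rw [same (n : ZMod m)]
        exact ih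
    intro x
    have := hnat x.val
    rwa [ZMod.natCast_rightInverse x] at this
  have hε : ε = 1 ∨ ε = -1 := by
    have := hadj 0
    rw [zero_add] at this
    rcases this with h | h
    · left; rw [hεdef, h]; ring
    · right; rw [hεdef, h]; ring
  have hlin : ∀ x : ZMod m, e x = e 0 + ε * x := by
    have hnat : ∀ n : ℕ, e (n : ZMod m) = e 0 + ε * n := by
      intro n
      induction n with
      | zero => simp
      | succ n ih =>
        push_cast
        have h1 : e ((n : ZMod m) + 1) = e (n : ZMod m) + ε := by
          have := hkey (n : ZMod m); rw [sub_eq_iff_eq_add] at this; rw [this]; ring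
        rw [h1, ih]; ring
    intro x
    have := hnat x.val
    rwa [ZMod.natCast_rightInverse x] at this
  rcases hε with h | h <;> rw [h] at hlin
  · left
    refine ⟨-(e 0), fun y => ?_⟩
    set x := y + -(e 0) with hx
    have hex : e x = y := by rw [hlin x, hx]; ring
    have hex1 : e (x + 1) = y + 1 := by rw [hlin (x+1), hx]; ring
    have hiff2 : (b x = true) ↔ (b' y = true) := by
      rw [← edge_fwd hm b x, ← edge_fwd hm b' y, hiso x (x+1), hex, hex1]
    exact bool_aux2 hiff2
  · right
    refine ⟨e 0 - 1, fun y => ?_⟩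
    set x := e 0 - 1 - y with hx
    have hex : e x = y + 1 := by rw [hlin x, hx]; ring
    have hex1 : e (x + 1) = y := by rw [hlin (x+1), hx]; ring
    have hiff2 : (b x = true) ↔ (b' y = false) := by
      rw [← edge_fwd hm b x, ← edge_bwd hm b' y, hiso x (x+1), hex, hex1]
    exact bool_aux hiff2


def blockStr (m k : ℕ) : ZMod m → Bool := fun x => decide (x.val < k)

def splitStr (m k : ℕ) : ZMod m → Bool := fun x => decide (x.val < k - 1 ∨ x.val = k)

lemma val_add_one (hm : 3 ≤ m) (x : ZMod m) : (x + 1).val = (x.val + 1) % m := by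
  haveI : Fact (1 < m) := ⟨by omega⟩
  rw [ZMod.val_add, ZMod.val_one]

lemma eq_cast_of_val {x : ZMod m} {a : ℕ} (h : x.val = a) : x = ((a : ℕ) : ZMod m) := by
  rw [← h]
  exact (ZMod.natCast_rightInverse x).symm

lemma blockStr_card (k : ℕ) (hk : k ≤ m) :
    (univ.filter fun x : ZMod m => blockStr m k x = true).card = k := by
  have : ∀ x : ZMod m, (blockStr m k x = true) = (x.val < k) := by
    intro x; simp [blockStr]
  simp only [this]
  exact card_filter_val_lt k hk

lemma splitStr_card (k : ℕ) (hk2 : 2 ≤ k) (hk : k < m) :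
    (univ.filter fun x : ZMod m => splitStr m k x = true).card = k := by
  have : (univ.filter fun x : ZMod m => splitStr m k x = true)
      = (univ.filter fun x : ZMod m => x.val < k - 1) ∪ {((k : ℕ) : ZMod m)} := by
    ext x
    simp only [mem_filter, mem_univ, true_and, mem_union, mem_singleton, splitStr,
      decide_eq_true_eq]
    constructor
    · rintro (h | h)
      · exact Or.inl h
      · exact Or.inr (eq_cast_of_val h)
    · rintro (h | rfl)
      · exact Or.inl h
      · exact Or.inr (ZMod.val_cast_of_lt hk)
  rw [this, card_union_of_disjoint, card_filter_val_lt (k-1) (by omega), card_singleton]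
  · omega
  · simp only [disjoint_singleton_right, mem_filter, mem_univ, true_and, not_lt]
    rw [ZMod.val_cast_of_lt hk]
    omega

lemma blockStr_desc (hm : 3 ≤ m) (k : ℕ) (hk2 : 2 ≤ k) (hk : k + 2 ≤ m) :
    desc m (blockStr m k) = 1 := by
  unfold desc
  have : (univ.filter fun x : ZMod m =>
      blockStr m k x = true ∧ blockStr m k (x+1) = false) = {(((k-1 : ℕ)) : ZMod m)} := by
    ext x
    simp only [mem_filter, mem_univ, true_and, mem_singleton, blockStr,
      decide_eq_true_eq, decide_eq_false_iff_not, not_lt]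
    constructor
    · rintro ⟨hx, hx1⟩
      rw [val_add_one hm] at hx1
      have hxm := ZMod.val_lt x
      rcases Nat.lt_or_ge (x.val + 1) m with h | h
      · rw [Nat.mod_eq_of_lt h] at hx1
        exact eq_cast_of_val (by omega)
      · have : (x.val + 1) % m = 0 := by
          have : x.val + 1 = m := by omega
          simp [this]
        omega
    · rintro rfl
      have hv : (((k-1 : ℕ) : ZMod m)).val = k - 1 := ZMod.val_cast_of_lt (by omega)
      refine ⟨by omega, ?_⟩
      rw [val_add_one hm, hv, Nat.mod_eq_of_lt (by omega)]
      omega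
  rw [this, card_singleton]

lemma splitStr_desc (hm : 3 ≤ m) (k : ℕ) (hk2 : 2 ≤ k) (hk : k + 2 ≤ m) :
    desc m (splitStr m k) = 2 := by
  unfold desc
  have : (univ.filter fun x : ZMod m =>
      splitStr m k x = true ∧ splitStr m k (x+1) = false)
      = {(((k-2 : ℕ)) : ZMod m), ((k : ℕ) : ZMod m)} := by
    ext x
    simp only [mem_filter, mem_univ, true_and, mem_insert, mem_singleton, splitStr,
      decide_eq_true_eq, decide_eq_false_iff_not, not_or, not_lt]
    constructor
    · rintro ⟨hx, hx1, hx2⟩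
      rw [val_add_one hm] at hx1 hx2
      have hxm := ZMod.val_lt x
      rcases Nat.lt_or_ge (x.val + 1) m with h | h
      · rw [Nat.mod_eq_of_lt h] at hx1 hx2
        rcases hx with hx | hx
        · exact Or.inl (eq_cast_of_val (by omega))
        · exact Or.inr (eq_cast_of_val (by omega))
      · have h0 : (x.val + 1) % m = 0 := by
          have : x.val + 1 = m := by omega
          simp [this]
        rw [h0] at hx1
        omega
    · rintro (rfl | rfl)
      · have hv : (((k-2 : ℕ) : ZMod m)).val = k - 2 := ZMod.val_cast_of_lt (by omega)
        refine ⟨Or.inl (by omega), ?_⟩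
        rw [val_add_one hm, hv, Nat.mod_eq_of_lt (by omega)]
        omega
      · have hv : (((k : ℕ) : ZMod m)).val = k := ZMod.val_cast_of_lt (by omega)
        refine ⟨Or.inr hv, ?_⟩
        rw [val_add_one hm, hv, Nat.mod_eq_of_lt (by omega)]
        omega
  rw [this]
  rw [Finset.card_pair]
  intro hc
  have := congrArg ZMod.val hc
  rw [ZMod.val_cast_of_lt (by omega : k - 2 < m),
    ZMod.val_cast_of_lt (by omega : k < m)] at this
  omega

lemma card_true_add_false (b : ZMod m → Bool) :
    (univ.filter fun x => b x = true).card + (univ.filter fun x => b x = false).card = m := by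
  classical
  have h := Finset.card_filter_add_card_filter_not
    (s := (univ : Finset (ZMod m))) (p := fun x => b x = true)
  have he : (univ.filter fun x : ZMod m => ¬ b x = true)
      = (univ.filter fun x : ZMod m => b x = false) := by
    apply Finset.filter_congr
    intro x _
    simp
  rw [he] at h
  rwa [card_univ, ZMod.card] at h

end basics

/-- If the orientation string of a cycle has at least two zeros and at least two ones, then
there is another string with the same number of ones which is not a cyclic rotation of it;
the two cycle graphs are non-isomorphic as directed graphs, yet they have identical
repetition-free self-returning walk profiles. -/
theorem cycle_walk_profile_indistinguishable (m : ℕ) [NeZero m] (hm : 3 ≤ m)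
    (b : ZMod m → Bool)
    (h0 : 2 ≤ (Finset.univ.filter fun x => b x = false).card)
    (h1 : 2 ≤ (Finset.univ.filter fun x => b x = true).card) :
    ∃ b' : ZMod m → Bool,
      (Finset.univ.filter fun x => b' x = true).card =
        (Finset.univ.filter fun x => b x = true).card ∧
      (¬ ∃ r : ZMod m, ∀ x, b' x = b (x + r)) ∧
      (¬ ∃ e : ZMod m ≃ ZMod m, ∀ x y, cycEdge m b x y ↔ cycEdge m b' (e x) (e y)) ∧
      (∀ (u : ZMod m) (k : ℕ),
        repFreeClosedWalkCount (cycEdge m b) m u k =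
          repFreeClosedWalkCount (cycEdge m b') m u k) := by
  classical
  set k := (Finset.univ.filter fun x => b x = true).card with hkdef
  have hsum := card_true_add_false b
  have hk2 : 2 ≤ k := h1
  have hkm : k + 2 ≤ m := by omega
  have hcFb : (univ.filter fun x => b x = false).card = m - k := by omega
  by_cases hD : desc m b = 1
  · -- b is (equivalent to) a block string; use the split string
    have hc' : (univ.filter fun x => splitStr m k x = true).card = k :=
      splitStr_card k hk2 (by omega)
    have hcF' : (univ.filter fun x => splitStr m k x = false).card = m - k := by
      have := card_true_add_false (splitStr m k)
      omega
    have hd' : desc m (splitStr m k) = 2 := splitStr_desc hm k hk2 hkm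
    refine ⟨splitStr m k, hc', ?_, ?_, ?_⟩
    · rintro ⟨r, hr⟩
      have := desc_rot hr
      rw [hd', hD] at this
      omega
    · rintro ⟨e, he⟩
      rcases iso_rot_or_refl hm e he with ⟨r, hr⟩ | ⟨s, hs⟩
      · have := desc_rot hr
        rw [hd', hD] at this
        omega
      · have := desc_refl hs
        rw [hd', hD] at this
        omega
    · intro u k'
      rw [walkCount hm b u k', walkCount hm (splitStr m k) u k', hc', ← hkdef, hcFb, hcF']
  · -- use the block string, whose descent number is 1 ≠ desc m b
    have hc' : (univ.filter fun x => blockStr m k x = true).card = k :=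
      blockStr_card k (by omega)
    have hcF' : (univ.filter fun x => blockStr m k x = false).card = m - k := by
      have := card_true_add_false (blockStr m k)
      omega
    have hd' : desc m (blockStr m k) = 1 := blockStr_desc hm k hk2 hkm
    refine ⟨blockStr m k, hc', ?_, ?_, ?_⟩
    · rintro ⟨r, hr⟩
      have := desc_rot hr
      rw [hd'] at this
      exact hD this.symm
    · rintro ⟨e, he⟩
      rcases iso_rot_or_refl hm e he with ⟨r, hr⟩ | ⟨s, hs⟩
      · have := desc_rot hr
        rw [hd'] at this
        exact hD this.symm
      · have := desc_refl hs
        rw [hd'] at this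
        exact hD this.symm
    · intro u k'
      rw [walkCount hm b u k', walkCount hm (blockStr m k) u k', hc', ← hkdef, hcFb, hcF']
end
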